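/- Let B ⊆ A be a regular inclusion of C*-algebras with the regular ideal intersection property, N a *-semigroup of normalizers with dense span, and E : A → B a faithful N-invariant conditional expectation. Then the map J ↦ J ∩ B is a Boolean algebra isomorphism from the regular ideals of A onto the invariant regular ideals of B, with inverse K ↦ J_K = {a ∈ A : E(a*a) ∈ K}. -/

import Mathlib

/-- Two-sided annihilator of a subset of an algebra. -/
def ann {A : Type*} [NonUnitalNonAssocSemiring A] (X : Set A) : Set A :=
  {a | ∀ x ∈ X, a * x = 0 ∧ x * a = 0}

/-- A (not necessarily closed) two-sided ideal, as a subset. -/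
def IsAlgIdeal {A : Type*} [NonUnitalNonAssocSemiring A] (J : Set A) : Prop :=
  (0 : A) ∈ J ∧ (∀ x ∈ J, ∀ y ∈ J, x + y ∈ J) ∧ ∀ a : A, ∀ x ∈ J, a * x ∈ J ∧ x * a ∈ J

/-- A closed two-sided ideal. -/
def IsIdeal {A : Type*} [NonUnitalNormedRing A] (J : Set A) : Prop :=
  IsAlgIdeal J ∧ IsClosed J

/-- A regular ideal: a closed two-sided ideal equal to its double annihilator. -/
def IsRegularIdeal {A : Type*} [NonUnitalNormedRing A] (J : Set A) : Prop :=
  IsIdeal J ∧ J = ann (ann J)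

variable {A : Type*} [NonUnitalNormedRing A] [StarRing A] [CStarRing A] [CompleteSpace A]
  [NormedSpace ℂ A] [IsScalarTower ℂ A A] [SMulCommClass ℂ A A] [StarModule ℂ A]
  [PartialOrder A] [StarOrderedRing A]

/-- `B` is a (non-unital, closed, star-closed) C*-subalgebra of `A`. -/
def IsCStarSubalgebra (B : Set A) : Prop :=
  (0 : A) ∈ B ∧ (∀ x ∈ B, ∀ y ∈ B, x + y ∈ B) ∧ (∀ x ∈ B, ∀ y ∈ B, x * y ∈ B) ∧
  (∀ (c : ℂ), ∀ x ∈ B, c • x ∈ B) ∧ (∀ x ∈ B, star x ∈ B) ∧ IsClosed B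

/-- `B` contains an approximate unit for `A`. -/
def ContainsApproxUnit (B : Set A) : Prop :=
  ∀ a : A, ∀ ε > (0 : ℝ), ∃ b ∈ B, ‖b‖ ≤ 1 ∧ ‖a - b * a‖ < ε ∧ ‖a - a * b‖ < ε

/-- `B ⊆ A` is an inclusion of C*-algebras: a C*-subalgebra containing an
approximate unit for `A`. -/
def IsCStarInclusion (B : Set A) : Prop :=
  IsCStarSubalgebra B ∧ ContainsApproxUnit B

/-- `n` is a normalizer of `B` in `A`: `nBn* ⊆ B` and `n*Bn ⊆ B`. -/
def IsNormalizer (B : Set A) (n : A) : Prop :=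
  (∀ b ∈ B, n * b * star n ∈ B) ∧ (∀ b ∈ B, star n * b * n ∈ B)

/-- `B ⊆ A` is a regular inclusion: an inclusion whose normalizers span a dense
subspace of `A`. -/
def IsRegularInclusion (B : Set A) : Prop :=
  IsCStarInclusion B ∧
  closure (Submodule.span ℂ {n | IsNormalizer B n} : Set A) = Set.univ

/-- `E : A → A` is a conditional expectation onto `B`. -/
def IsCondExp (B : Set A) (E : A → A) : Prop :=
  (∀ a, E a ∈ B) ∧ (∀ b ∈ B, E b = b) ∧
  (∀ x y, E (x + y) = E x + E y) ∧ (∀ (c : ℂ) (x : A), E (c • x) = c • E x) ∧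
  (∀ a : A, 0 ≤ a → 0 ≤ E a) ∧ (∀ a, ‖E a‖ ≤ ‖a‖) ∧
  (∀ b ∈ B, ∀ a, E (b * a) = b * E a ∧ E (a * b) = E a * b)

/-- Faithfulness of a positive map: `E(a*a) = 0 → a = 0`. -/
def IsFaithful (E : A → A) : Prop := ∀ a, E (star a * a) = 0 → a = 0

/-- `N` is a `*`-semigroup of normalizers of `B` with dense linear span in `A`. -/
def IsNormalizerSemigroup (B N : Set A) : Prop :=
  (∀ n ∈ N, IsNormalizer B n) ∧ (∀ n ∈ N, star n ∈ N) ∧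
  (∀ m ∈ N, ∀ n ∈ N, m * n ∈ N) ∧
  closure (Submodule.span ℂ N : Set A) = Set.univ

/-- `K` is invariant under `N`: `nKn* ⊆ K` for all `n ∈ N`. -/
def InvariantUnder (N K : Set A) : Prop := ∀ n ∈ N, ∀ k ∈ K, n * k * star n ∈ K

/-- `E` is `N`-invariant: `E(nan*) = nE(a)n*` for all `n ∈ N`. -/
def IsInvariantCondExp (N : Set A) (E : A → A) : Prop :=
  ∀ n ∈ N, ∀ a : A, E (n * a * star n) = n * E a * star n

/-- A closed two-sided ideal of the subalgebra `B`. -/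
def IsIdealIn (B K : Set A) : Prop :=
  K ⊆ B ∧ (0 : A) ∈ K ∧ (∀ x ∈ K, ∀ y ∈ K, x + y ∈ K) ∧
  (∀ b ∈ B, ∀ x ∈ K, b * x ∈ K ∧ x * b ∈ K) ∧ IsClosed K

/-- A regular ideal of the subalgebra `B`: `K = K^{⊥_B ⊥_B}` with annihilators
computed inside `B`. -/
def IsRegularIdealIn (B K : Set A) : Prop :=
  IsIdealIn B K ∧ K = ann (ann K ∩ B) ∩ B

/-- `B ⊆ A` has the ideal intersection property. -/
def HasIIP (B : Set A) : Prop :=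
  ∀ J : Set A, IsIdeal J → J ≠ {0} → ∃ x ∈ J ∩ B, x ≠ 0

/-- `B ⊆ A` has the regular ideal intersection property. -/
def HasRIIP (B : Set A) : Prop :=
  ∀ J : Set A, IsRegularIdeal J → J ≠ {0} → ∃ x ∈ J ∩ B, x ≠ 0


/-!
Two facts drive the correspondence. By the regular ideal intersection property, a regular ideal
`J₁` lies in a regular ideal `J₂` as soon as `J₁ ∩ B ⊆ J₂`. By faithfulness and
`B`-bimodularity of `E`, `K^⊥ ∩ B` annihilates `J_K`. Applied to `K = J ∩ B`, for which
`J_K ∩ B = J ∩ B`, these give `J_K^⊥ = J^⊥`, and everything else follows from `J = J^⊥⊥`.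
That `J_K` is a closed ideal uses that closed ideals of `B` are hereditary and self-adjoint
(proved with the approximate units `min 1 (n y)` given by the functional calculus), and, for
right multiplication, `N`-invariance together with the density of `span N`.
-/

section Annihilator

variable {A : Type*} [NonUnitalSemiring A]

theorem ann_anti {X Y : Set A} (h : X ⊆ Y) : ann Y ⊆ ann X :=
  fun _ ha x hx => ha x (h hx)

theorem subset_ann_ann (X : Set A) : X ⊆ ann (ann X) :=
  fun x hx _ ha => (ha x hx).symm

theorem ann_ann_ann (X : Set A) : ann (ann (ann X)) = ann X :=
  (ann_anti (subset_ann_ann X)).antisymm (subset_ann_ann (ann X))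

theorem IsAlgIdeal.ann {J : Set A} (hJ : IsAlgIdeal J) : IsAlgIdeal (ann J) := by
  refine ⟨fun x _ => by simp, fun a ha b hb x hx => ?_,
    fun c a ha => ⟨fun x hx => ?_, fun x hx => ?_⟩⟩
  · simp [add_mul, mul_add, (ha x hx).1, (ha x hx).2, (hb x hx).1, (hb x hx).2]
  · rw [mul_assoc, (ha x hx).1, mul_zero, ← mul_assoc, (ha _ (hJ.2.2 c x hx).2).2]
    exact ⟨rfl, rfl⟩
  · rw [mul_assoc, (ha _ (hJ.2.2 c x hx).1).1, ← mul_assoc, (ha x hx).2, zero_mul]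
    exact ⟨rfl, rfl⟩

theorem subset_ann_of_inter_subset {I J : Set A} (hI : IsAlgIdeal I) (hJ : IsAlgIdeal J)
    (h : I ∩ J ⊆ {0}) : I ⊆ ann J :=
  fun a ha x hx =>
    ⟨h ⟨(hI.2.2 x a ha).2, (hJ.2.2 a x hx).1⟩, h ⟨(hI.2.2 x a ha).1, (hJ.2.2 a x hx).2⟩⟩

theorem star_mem_ann [StarRing A] {X : Set A} (hX : ∀ x ∈ X, star x ∈ X) {a : A}
    (ha : a ∈ ann X) : star a ∈ ann X := fun x hx => by
  rw [← star_star x, ← star_mul, ← star_mul, (ha _ (hX x hx)).1, (ha _ (hX x hx)).2, star_zero]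
  exact ⟨rfl, rfl⟩

end Annihilator

section RegularIdeal

variable {A : Type*} [NonUnitalNormedRing A]

theorem isClosed_ann (X : Set A) : IsClosed (ann X) := by
  simp only [ann, Set.ofPred_forall]
  exact isClosed_biInter fun x _ =>
    (isClosed_eq (continuous_mul_const x) continuous_const).inter
      (isClosed_eq (continuous_const_mul x) continuous_const)

theorem isRegularIdeal_ann {J : Set A} (hJ : IsAlgIdeal J) : IsRegularIdeal (ann J) :=
  ⟨⟨hJ.ann, isClosed_ann J⟩, (ann_ann_ann J).symm⟩

theorem IsRegularIdeal.inter {J K : Set A} (hJ : IsRegularIdeal J) (hK : IsRegularIdeal K) :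
    IsRegularIdeal (J ∩ K) := by
  obtain ⟨⟨⟨hJ0, hJadd, hJmul⟩, hJcl⟩, hJreg⟩ := hJ
  obtain ⟨⟨⟨hK0, hKadd, hKmul⟩, hKcl⟩, hKreg⟩ := hK
  refine ⟨⟨⟨⟨hJ0, hK0⟩, fun x hx y hy => ⟨hJadd x hx.1 y hy.1, hKadd x hx.2 y hy.2⟩,
    fun a x hx => ⟨⟨(hJmul a x hx.1).1, (hKmul a x hx.2).1⟩,
      ⟨(hJmul a x hx.1).2, (hKmul a x hx.2).2⟩⟩⟩, hJcl.inter hKcl⟩,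
    (subset_ann_ann _).antisymm fun a ha => ⟨?_, ?_⟩⟩
  · exact hJreg ▸ ann_anti (ann_anti Set.inter_subset_left) ha
  · exact hKreg ▸ ann_anti (ann_anti Set.inter_subset_right) ha

/-- `x` kills `x⋆x ∈ J`, so `(x⋆x)² = 0`. -/
theorem eq_zero_of_mem_ann_self [StarRing A] [CStarRing A] {J : Set A}
    (hJ : ∀ a, ∀ x ∈ J, a * x ∈ J) {x : A} (hxJ : x ∈ J) (hx : x ∈ ann J) : x = 0 := by
  have hsq : star (star x * x) * (star x * x) = 0 := by
    rw [star_mul, star_star, mul_assoc, (hx _ (hJ (star x) x hxJ)).1, mul_zero]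
  rwa [CStarRing.star_mul_self_eq_zero_iff, CStarRing.star_mul_self_eq_zero_iff] at hsq

/-- Otherwise `J₁ ∩ ann J₂` is a nonzero regular ideal meeting `B` inside `J₂ ∩ ann J₂ = 0`. -/
theorem HasRIIP.subset_of_inter_subset [StarRing A] [CStarRing A] {B J₁ J₂ : Set A}
    (hRIIP : HasRIIP B) (h₁ : IsRegularIdeal J₁) (h₂ : IsRegularIdeal J₂) (h : J₁ ∩ B ⊆ J₂) :
    J₁ ⊆ J₂ := by
  have hI : J₁ ∩ ann J₂ = {0} := by
    by_contra hne
    obtain ⟨x, ⟨⟨hx₁, hx₂⟩, hxB⟩, hx0⟩ := hRIIP _ (h₁.inter (isRegularIdeal_ann h₂.1.1)) hne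
    exact hx0 (eq_zero_of_mem_ann_self (fun a x hx => (h₂.1.1.2.2 a x hx).1) (h ⟨hx₁, hxB⟩) hx₂)
  exact (subset_ann_of_inter_subset h₁.1.1 h₂.1.1.ann hI.subset).trans h₂.2.superset

end RegularIdeal

section CStarAlgebra

variable {A : Type*} [NonUnitalCStarAlgebra A]

theorem cfcₙ_mem_of_isClosed {S : NonUnitalSubalgebra ℝ A} (hS : IsClosed (S : Set A))
    (f : ℝ → ℝ) {a : A} (ha : IsSelfAdjoint a) (haS : a ∈ S) : cfcₙ f a ∈ S := by
  have hadj : (NonUnitalStarAlgebra.adjoin ℝ {a} : Set A) ⊆ S := by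
    rw [← NonUnitalStarSubalgebra.coe_toNonUnitalSubalgebra,
      NonUnitalStarAlgebra.adjoin_toNonUnitalSubalgebra, Set.star_singleton, ha.star_eq,
      Set.union_self]
    exact NonUnitalAlgebra.adjoin_le (Set.singleton_subset_iff.mpr haS)
  exact closure_minimal hadj hS (cfcₙ_mem_elemental f a)

/-- `(1 - u) * d * (1 - u)`, expanded so that it makes sense without a unit. -/
def conjOneSub (u d : A) : A := d - u * d - d * u + u * d * u

theorem conjOneSub_cfcₙ {y : A} (hy : IsSelfAdjoint y) (g : ℝ → ℝ) (hg : Continuous g)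
    (hg0 : g 0 = 0) :
    conjOneSub (cfcₙ g y) y = cfcₙ (fun t => t * (1 - g t) ^ 2) y := by
  have : (fun t => t * (1 - g t) ^ 2) = fun t => t - g t * t - t * g t + g t * t * g t := by
    funext t; ring
  rw [this, cfcₙ_add .., cfcₙ_sub .., cfcₙ_sub .., cfcₙ_mul .., cfcₙ_mul ..,
    cfcₙ_mul (fun t => g t * t) g, cfcₙ_mul .., cfcₙ_id' ℝ y]
  rfl

theorem star_sub_mul_mul_sub_mul {u : A} (hu : IsSelfAdjoint u) (s : A) :
    star (s - s * u) * (s - s * u) = conjOneSub u (star s * s) := by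
  simp only [conjOneSub, star_sub, star_mul, hu.star_eq]
  noncomm_ring

theorem norm_sub_mul_sq {u : A} (hu : IsSelfAdjoint u) (s : A) :
    ‖s - s * u‖ ^ 2 = ‖conjOneSub u (star s * s)‖ := by
  rw [← star_sub_mul_mul_sub_mul hu, CStarRing.norm_star_mul_self, sq]

variable [PartialOrder A] [StarOrderedRing A]

theorem conjOneSub_nonneg {u d : A} (hu : IsSelfAdjoint u) (hd : 0 ≤ d) :
    0 ≤ conjOneSub u d := by
  obtain ⟨s, rfl⟩ := CStarAlgebra.nonneg_iff_eq_star_mul_self.mp hd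
  rw [← star_sub_mul_mul_sub_mul hu]
  exact star_mul_self_nonneg _

theorem conjOneSub_mono {u d e : A} (hu : IsSelfAdjoint u) (h : d ≤ e) :
    conjOneSub u d ≤ conjOneSub u e := by
  have : conjOneSub u e - conjOneSub u d = conjOneSub u (e - d) := by
    simp only [conjOneSub]; noncomm_ring
  exact sub_nonneg.mp (this ▸ conjOneSub_nonneg hu (sub_nonneg.mpr h))

/-- Take `u = g(y)` with `g t = min 1 (m t)`: then `t (1 - g t)² ≤ 1 / m` for `t ≥ 0`. -/
theorem exists_conjOneSub_norm_lt {S : NonUnitalSubalgebra ℝ A} (hS : IsClosed (S : Set A))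
    {y : A} (hy : 0 ≤ y) (hyS : y ∈ S) {ε : ℝ} (hε : 0 < ε) :
    ∃ u ∈ S, IsSelfAdjoint u ∧ ‖conjOneSub u y‖ < ε := by
  obtain ⟨n, hn⟩ := exists_nat_one_div_lt hε
  set g : ℝ → ℝ := fun t => min 1 ((n + 1) * t)
  refine ⟨cfcₙ g y, cfcₙ_mem_of_isClosed hS g hy.isSelfAdjoint hyS, cfcₙ_predicate g y, ?_⟩
  rw [conjOneSub_cfcₙ hy.isSelfAdjoint g (by fun_prop) (by simp [g])]
  refine (norm_cfcₙ_le fun t ht => ?_).trans_lt hn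
  have ht0 : 0 ≤ t := quasispectrum_nonneg_of_nonneg y hy t ht
  have hn0 : (0 : ℝ) < n + 1 := by positivity
  rw [Real.norm_of_nonneg (by positivity)]
  rcases le_total ((n + 1) * t) 1 with h | h
  · simp only [g, min_eq_right h]
    calc t * (1 - (n + 1) * t) ^ 2 ≤ t * 1 := by gcongr; nlinarith [mul_nonneg hn0.le ht0]
      _ ≤ 1 / (n + 1) := by rw [le_div_iff₀ hn0]; linarith
  · simpa [g, min_eq_left h] using hn0.le

theorem exists_norm_sub_mul_lt {S : NonUnitalSubalgebra ℝ A} (hS : IsClosed (S : Set A))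
    {k : A} (hk : star k * k ∈ S) {ε : ℝ} (hε : 0 < ε) :
    ∃ u ∈ S, IsSelfAdjoint u ∧ ‖k - k * u‖ < ε := by
  obtain ⟨u, huS, hu, hlt⟩ :=
    exists_conjOneSub_norm_lt hS (star_mul_self_nonneg k) hk (pow_pos hε 2)
  rw [← norm_sub_mul_sq hu] at hlt
  exact ⟨u, huS, hu, lt_of_pow_lt_pow_left₀ 2 hε.le hlt⟩

theorem mem_of_star_mul_self_mem {S : NonUnitalSubalgebra ℝ A} (hS : IsClosed (S : Set A))
    {K : Set A} (hK : IsClosed K) {k : A} (hk : star k * k ∈ S) (hkK : ∀ u ∈ S, k * u ∈ K) :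
    k ∈ K := by
  refine hK.closure_subset (Metric.mem_closure_iff.mpr fun ε hε => ?_)
  obtain ⟨u, huS, -, hlt⟩ := exists_norm_sub_mul_lt hS hk hε
  exact ⟨k * u, hkK u huS, by rwa [dist_eq_norm]⟩

theorem star_mem_of_star_mul_self_mem {S : NonUnitalSubalgebra ℝ A} (hS : IsClosed (S : Set A))
    {K : Set A} (hK : IsClosed K) {k : A} (hk : star k * k ∈ S)
    (hkK : ∀ u ∈ S, u * star k ∈ K) : star k ∈ K := by
  refine hK.closure_subset (Metric.mem_closure_iff.mpr fun ε hε => ?_)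
  obtain ⟨u, huS, hu, hlt⟩ := exists_norm_sub_mul_lt hS hk hε
  refine ⟨u * star k, hkK u huS, ?_⟩
  rwa [dist_eq_norm, ← norm_star, star_sub, star_mul, star_star, hu.star_eq]

/-- Writing `x = r⋆r`, `‖x - x u‖² ≤ ‖x‖ ‖(1 - u) x (1 - u)‖ ≤ ‖x‖ ‖(1 - u) y (1 - u)‖`. -/
theorem mem_of_nonneg_of_le {S : NonUnitalSubalgebra ℝ A} (hS : IsClosed (S : Set A))
    {K : Set A} (hK : IsClosed K) {x y : A} (hx : 0 ≤ x) (hxy : x ≤ y) (hy : y ∈ S)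
    (hxK : ∀ u ∈ S, x * u ∈ K) : x ∈ K := by
  refine hK.closure_subset (Metric.mem_closure_iff.mpr fun ε hε => ?_)
  obtain ⟨r, rfl⟩ := CStarAlgebra.nonneg_iff_eq_star_mul_self.mp hx
  have hδ : 0 < ε ^ 2 / (‖star r * r‖ + 1) := by positivity
  obtain ⟨u, huS, hu, hlt⟩ := exists_conjOneSub_norm_lt hS (hx.trans hxy) hy hδ
  refine ⟨star r * r * u, hxK u huS, ?_⟩
  have hfactor : star r * r - star r * r * u = star r * (r - r * u) := by noncomm_ring
  have hr : ‖star r‖ ^ 2 = ‖star r * r‖ := by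
    rw [norm_star, CStarRing.norm_star_mul_self, sq]
  have hcomp : ‖r - r * u‖ ^ 2 ≤ ‖conjOneSub u y‖ := by
    rw [norm_sub_mul_sq hu]
    exact CStarAlgebra.norm_le_norm_of_nonneg_of_le (conjOneSub_nonneg hu hx)
      (conjOneSub_mono hu hxy)
  have hsq : dist (star r * r) (star r * r * u) ^ 2 < ε ^ 2 := by
    rw [dist_eq_norm, hfactor]
    calc ‖star r * (r - r * u)‖ ^ 2 ≤ ‖star r‖ ^ 2 * ‖r - r * u‖ ^ 2 := by
          rw [← mul_pow]; gcongr; exact norm_mul_le _ _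
      _ ≤ ‖star r * r‖ * ‖conjOneSub u y‖ := by rw [hr]; gcongr
      _ ≤ (‖star r * r‖ + 1) * ‖conjOneSub u y‖ := by gcongr; linarith
      _ < ε ^ 2 := by rwa [lt_div_iff₀' (by positivity)] at hlt
  exact lt_of_pow_lt_pow_left₀ 2 hε.le hsq

end CStarAlgebra

section Ideals

variable {A : Type*} [NonUnitalCStarAlgebra A] {B J K : Set A}

theorem smul_mem_of_containsApproxUnit (hB : ContainsApproxUnit B)
    (hBsmul : ∀ c : ℂ, ∀ b ∈ B, c • b ∈ B) (hK : IsClosed K)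
    (hBK : ∀ b ∈ B, ∀ x ∈ K, b * x ∈ K) (c : ℂ) {x : A} (hx : x ∈ K) : c • x ∈ K := by
  refine hK.closure_subset (Metric.mem_closure_iff.mpr fun ε hε => ?_)
  obtain ⟨b, hb, -, hbx, -⟩ := hB x (ε / (‖c‖ + 1)) (by positivity)
  refine ⟨(c • b) * x, hBK _ (hBsmul c b hb) x hx, ?_⟩
  rw [dist_eq_norm, smul_mul_assoc, ← smul_sub, norm_smul]
  calc ‖c‖ * ‖x - b * x‖ ≤ (‖c‖ + 1) * ‖x - b * x‖ := by gcongr; linarith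
    _ < ε := by rwa [lt_div_iff₀' (by positivity)] at hbx

theorem IsIdeal.isIdealIn_univ (hJ : IsIdeal J) : IsIdealIn Set.univ J :=
  ⟨Set.subset_univ J, hJ.1.1, hJ.1.2.1, fun b _ x hx => hJ.1.2.2 b x hx, hJ.2⟩

theorem IsIdeal.inter_isIdealIn (hB : IsCStarSubalgebra B) (hJ : IsIdeal J) :
    IsIdealIn B (J ∩ B) :=
  ⟨Set.inter_subset_right, ⟨hJ.1.1, hB.1⟩,
    fun x hx y hy => ⟨hJ.1.2.1 x hx.1 y hy.1, hB.2.1 x hx.2 y hy.2⟩,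
    fun b hb x hx => ⟨⟨(hJ.1.2.2 b x hx.1).1, hB.2.2.1 b hb x hx.2⟩,
      ⟨(hJ.1.2.2 b x hx.1).2, hB.2.2.1 x hx.2 b hb⟩⟩, hJ.2.inter hB.2.2.2.2.2⟩

theorem IsAlgIdeal.invariantUnder_inter (hJ : IsAlgIdeal J) :
    InvariantUnder {n | IsNormalizer B n} (J ∩ B) :=
  fun n hn k hk => ⟨(hJ.2.2 _ _ (hJ.2.2 n k hk.1).1).2, hn.1 k hk.2⟩

theorem IsIdeal.smul_mem (hB : IsCStarInclusion B) (hJ : IsIdeal J) (c : ℂ) {x : A}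
    (hx : x ∈ J) : c • x ∈ J :=
  smul_mem_of_containsApproxUnit hB.2 hB.1.2.2.2.1 hJ.2 (fun b _ x hx => (hJ.1.2.2 b x hx).1)
    c hx

theorem IsIdealIn.smul_mem (hB : IsCStarInclusion B) (hK : IsIdealIn B K) (c : ℂ) {x : A}
    (hx : x ∈ K) : c • x ∈ K :=
  smul_mem_of_containsApproxUnit hB.2 hB.1.2.2.2.1 hK.2.2.2.2
    (fun b hb x hx => (hK.2.2.2.1 b hb x hx).1) c hx

def IsIdealIn.toNonUnitalSubalgebra (hK : IsIdealIn B K) (hsmul : ∀ c : ℂ, ∀ x ∈ K, c • x ∈ K) :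
    NonUnitalSubalgebra ℝ A where
  carrier := K
  add_mem' hx hy := hK.2.2.1 _ hx _ hy
  zero_mem' := hK.2.1
  mul_mem' hx hy := (hK.2.2.2.1 _ (hK.1 hx) _ hy).1
  smul_mem' r x hx := by simpa only [Complex.coe_smul] using hsmul r x hx

variable [PartialOrder A] [StarOrderedRing A]

theorem IsIdealIn.star_mem_of_smul_mem (hBstar : ∀ b ∈ B, star b ∈ B) (hK : IsIdealIn B K)
    (hsmul : ∀ c : ℂ, ∀ x ∈ K, c • x ∈ K) {k : A} (hk : k ∈ K) : star k ∈ K :=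
  star_mem_of_star_mul_self_mem (S := hK.toNonUnitalSubalgebra hsmul) hK.2.2.2.2 hK.2.2.2.2
    (hK.2.2.2.1 _ (hBstar k (hK.1 hk)) k hk).1
    fun u hu => (hK.2.2.2.1 _ (hBstar k (hK.1 hk)) u hu).2

theorem IsIdealIn.star_mem (hB : IsCStarInclusion B) (hK : IsIdealIn B K) {k : A} (hk : k ∈ K) :
    star k ∈ K :=
  hK.star_mem_of_smul_mem hB.1.2.2.2.2.1 (fun c _ hx => hK.smul_mem hB c hx) hk

theorem IsIdeal.star_mem (hB : IsCStarInclusion B) (hJ : IsIdeal J) {k : A} (hk : k ∈ J) :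
    star k ∈ J :=
  hJ.isIdealIn_univ.star_mem_of_smul_mem (fun _ _ => Set.mem_univ _)
    (fun c _ hx => hJ.smul_mem hB c hx) hk

theorem IsIdealIn.mem_of_star_mul_self_mem (hB : IsCStarInclusion B) (hK : IsIdealIn B K)
    {k : A} (hkB : k ∈ B) (hk : star k * k ∈ K) : k ∈ K :=
  _root_.mem_of_star_mul_self_mem
    (S := hK.toNonUnitalSubalgebra fun c _ hx => hK.smul_mem hB c hx)
    hK.2.2.2.2 hK.2.2.2.2 hk fun u hu => (hK.2.2.2.1 k hkB u hu).1

theorem IsIdealIn.mem_of_nonneg_of_le (hB : IsCStarInclusion B) (hK : IsIdealIn B K) {x y : A}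
    (hxB : x ∈ B) (hx : 0 ≤ x) (hxy : x ≤ y) (hy : y ∈ K) : x ∈ K :=
  _root_.mem_of_nonneg_of_le (S := hK.toNonUnitalSubalgebra fun c _ hx => hK.smul_mem hB c hx)
    hK.2.2.2.2 hK.2.2.2.2 hx hxy hy fun u hu => (hK.2.2.2.1 x hxB u hu).1

end Ideals

namespace IsCondExp

variable {A : Type*} [NonUnitalNormedRing A] [NormedSpace ℂ A] [PartialOrder A] {B : Set A}
  {E : A → A}

def toLinearMap (hE : IsCondExp B E) : A →ₗ[ℂ] A where
  toFun := E
  map_add' := hE.2.2.1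
  map_smul' := hE.2.2.2.1

theorem map_zero (hE : IsCondExp B E) : E 0 = 0 := hE.toLinearMap.map_zero

theorem map_add (hE : IsCondExp B E) (x y : A) : E (x + y) = E x + E y := hE.2.2.1 x y

theorem map_smul (hE : IsCondExp B E) (c : ℂ) (x : A) : E (c • x) = c • E x := hE.2.2.2.1 c x

theorem mem (hE : IsCondExp B E) (a : A) : E a ∈ B := hE.1 a

theorem apply_of_mem (hE : IsCondExp B E) {b : A} (hb : b ∈ B) : E b = b := hE.2.1 b hb

theorem nonneg (hE : IsCondExp B E) {a : A} (ha : 0 ≤ a) : 0 ≤ E a := hE.2.2.2.2.1 a ha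

theorem map_mul_left (hE : IsCondExp B E) {b : A} (hb : b ∈ B) (a : A) : E (b * a) = b * E a :=
  (hE.2.2.2.2.2.2 b hb a).1

theorem map_mul_right (hE : IsCondExp B E) {b : A} (hb : b ∈ B) (a : A) : E (a * b) = E a * b :=
  (hE.2.2.2.2.2.2 b hb a).2

theorem map_mul_mul (hE : IsCondExp B E) {b c : A} (hb : b ∈ B) (hc : c ∈ B) (a : A) :
    E (b * a * c) = b * E a * c := by
  rw [hE.map_mul_right hc, hE.map_mul_left hb]

theorem continuous (hE : IsCondExp B E) : Continuous E :=
  continuous_of_linear_of_bound (𝕜 := ℂ) hE.2.2.1 hE.2.2.2.1 (C := 1)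
    fun x => by simpa using hE.2.2.2.2.2.1 x

theorem monotone [AddLeftMono A] (hE : IsCondExp B E) : Monotone E := fun x y h =>
  sub_nonneg.mp (hE.toLinearMap.map_sub y x ▸ hE.nonneg (sub_nonneg.mpr h))

end IsCondExp

/-- The paper's `J_K`. -/
def inducedIdeal {A : Type*} [Mul A] [Star A] (E : A → A) (K : Set A) : Set A :=
  {a | E (star a * a) ∈ K}

section InducedIdeal

variable {A : Type*} [NonUnitalCStarAlgebra A] {B N K : Set A} {E : A → A}

theorem mul_mem_inducedIdeal_right_of_mem (hN : IsNormalizerSemigroup B N)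
    (hEinv : IsInvariantCondExp N E) (hKinv : InvariantUnder {n | IsNormalizer B n} K) {x n : A}
    (hx : x ∈ inducedIdeal E K) (hn : n ∈ N) : x * n ∈ inducedIdeal E K := by
  have hn' : star n ∈ N := hN.2.1 n hn
  have e : star (x * n) * (x * n) = star n * (star x * x) * star (star n) := by
    rw [star_star, star_mul]; noncomm_ring
  change E (star (x * n) * (x * n)) ∈ K
  rw [e, hEinv _ hn']
  exact hKinv _ (hN.1 _ hn') _ hx

variable [PartialOrder A]

theorem isClosed_inducedIdeal (hE : IsCondExp B E) (hK : IsClosed K) :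
    IsClosed (inducedIdeal E K) :=
  hK.preimage (hE.continuous.comp (continuous_star.mul continuous_id))

theorem zero_mem_inducedIdeal (hE : IsCondExp B E) (hK : (0 : A) ∈ K) :
    (0 : A) ∈ inducedIdeal E K := by
  simpa [inducedIdeal, hE.map_zero] using hK

theorem smul_mem_inducedIdeal (hB : IsCStarInclusion B) (hE : IsCondExp B E)
    (hK : IsIdealIn B K) (c : ℂ) {x : A} (hx : x ∈ inducedIdeal E K) :
    c • x ∈ inducedIdeal E K := by
  change E (star (c • x) * (c • x)) ∈ K
  rw [star_smul, smul_mul_assoc, mul_smul_comm, smul_smul, hE.map_smul]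
  exact hK.smul_mem hB _ hx

variable [StarOrderedRing A]

/-- `K` is hereditary and `(x + y)⋆(x + y) ≤ 2 (x⋆x + y⋆y)`. -/
theorem add_mem_inducedIdeal (hB : IsCStarInclusion B) (hE : IsCondExp B E) (hK : IsIdealIn B K)
    {x y : A} (hx : x ∈ inducedIdeal E K) (hy : y ∈ inducedIdeal E K) :
    x + y ∈ inducedIdeal E K := by
  have hle : star (x + y) * (x + y) ≤ (star x * x + star y * y) + (star x * x + star y * y) := by
    rw [← sub_nonneg]
    convert star_mul_self_nonneg (x - y) using 1
    simp only [star_add, star_sub]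
    noncomm_ring
  have hsum : E ((star x * x + star y * y) + (star x * x + star y * y)) ∈ K := by
    simp only [hE.map_add]
    exact hK.2.2.1 _ (hK.2.2.1 _ hx _ hy) _ (hK.2.2.1 _ hx _ hy)
  exact hK.mem_of_nonneg_of_le hB (hE.mem _) (hE.nonneg (star_mul_self_nonneg _))
    (hE.monotone hle) hsum

/-- `K` is hereditary and `(c x)⋆(c x) ≤ ‖c⋆c‖ x⋆x`. -/
theorem mul_mem_inducedIdeal_left (hB : IsCStarInclusion B) (hE : IsCondExp B E)
    (hK : IsIdealIn B K) (c : A) {x : A} (hx : x ∈ inducedIdeal E K) :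
    c * x ∈ inducedIdeal E K := by
  have hle : star (c * x) * (c * x) ≤ ((‖star c * c‖ : ℝ) : ℂ) • (star x * x) := by
    rw [Complex.coe_smul, star_mul, mul_assoc, ← mul_assoc (star c), ← mul_assoc]
    exact CStarAlgebra.star_left_conjugate_le_norm_smul
  exact hK.mem_of_nonneg_of_le hB (hE.mem _) (hE.nonneg (star_mul_self_nonneg _))
    ((hE.monotone hle).trans_eq (hE.map_smul _ _)) (hK.smul_mem hB _ hx)

/-- `{c | x c ∈ J_K}` is a closed subspace containing `N`, whose span is dense. -/
theorem mul_mem_inducedIdeal_right (hB : IsCStarInclusion B) (hE : IsCondExp B E)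
    (hN : IsNormalizerSemigroup B N) (hEinv : IsInvariantCondExp N E) (hK : IsIdealIn B K)
    (hKinv : InvariantUnder {n | IsNormalizer B n} K) {x : A} (hx : x ∈ inducedIdeal E K)
    (c : A) : x * c ∈ inducedIdeal E K := by
  let V : Submodule ℂ A :=
    { carrier := inducedIdeal E K
      add_mem' := add_mem_inducedIdeal hB hE hK
      zero_mem' := zero_mem_inducedIdeal hE hK.2.1
      smul_mem' := smul_mem_inducedIdeal hB hE hK }
  have hspan : Submodule.span ℂ N ≤ V.comap (LinearMap.mulLeft ℂ x) :=
    Submodule.span_le.mpr fun n hn => mul_mem_inducedIdeal_right_of_mem hN hEinv hKinv hx hn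
  have hclosed : IsClosed {c | x * c ∈ inducedIdeal E K} :=
    (isClosed_inducedIdeal hE hK.2.2.2.2).preimage (continuous_const_mul x)
  have hdense := closure_minimal hspan hclosed
  rw [hN.2.2.2] at hdense
  exact hdense (Set.mem_univ c)

theorem isIdeal_inducedIdeal (hB : IsCStarInclusion B) (hE : IsCondExp B E)
    (hN : IsNormalizerSemigroup B N) (hEinv : IsInvariantCondExp N E) (hK : IsIdealIn B K)
    (hKinv : InvariantUnder {n | IsNormalizer B n} K) : IsIdeal (inducedIdeal E K) :=
  ⟨⟨zero_mem_inducedIdeal hE hK.2.1, fun _ hx _ hy => add_mem_inducedIdeal hB hE hK hx hy,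
    fun c _ hx => ⟨mul_mem_inducedIdeal_left hB hE hK c hx,
      mul_mem_inducedIdeal_right hB hE hN hEinv hK hKinv hx c⟩⟩,
    isClosed_inducedIdeal hE hK.2.2.2.2⟩

theorem inducedIdeal_inter (hB : IsCStarInclusion B) (hE : IsCondExp B E) (hK : IsIdealIn B K) :
    inducedIdeal E K ∩ B = K := by
  ext b
  constructor
  · rintro ⟨hb, hbB⟩
    have hbb : star b * b ∈ B := hB.1.2.2.1 _ (hB.1.2.2.2.2.1 b hbB) b hbB
    exact hK.mem_of_star_mul_self_mem hB hbB (hE.apply_of_mem hbb ▸ hb)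
  · intro hb
    have hbb : star b * b ∈ K := (hK.2.2.2.1 _ (hB.1.2.2.2.2.1 b (hK.1 hb)) b hb).1
    refine ⟨?_, hK.1 hb⟩
    change E (star b * b) ∈ K
    rwa [hE.apply_of_mem (hK.1 hbb)]

/-- For `x ∈ ann K ∩ B` and `y ∈ J_K`, `E((xy)(xy)⋆) = x E(yy⋆) x⋆ = 0` and
`E((yx)⋆(yx)) = x⋆ E(y⋆y) x = 0`, so faithfulness of `E` gives `xy = yx = 0`. -/
theorem ann_inter_subset_ann_inducedIdeal (hB : IsCStarInclusion B) (hE : IsCondExp B E)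
    (hEf : IsFaithful E) (hN : IsNormalizerSemigroup B N) (hEinv : IsInvariantCondExp N E)
    (hK : IsIdealIn B K) (hKinv : InvariantUnder {n | IsNormalizer B n} K) :
    ann K ∩ B ⊆ ann (inducedIdeal E K) := by
  rintro x ⟨hx, hxB⟩ y hy
  have hxsB : star x ∈ B := hB.1.2.2.2.2.1 x hxB
  have hxs : star x ∈ ann K := star_mem_ann (fun _ hk => hK.star_mem hB hk) hx
  have hy' : E (y * star y) ∈ K := by
    simpa [inducedIdeal] using (isIdeal_inducedIdeal hB hE hN hEinv hK hKinv).star_mem hB hy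
  constructor
  · rw [← star_eq_zero]
    refine hEf _ ?_
    rw [star_star, star_mul, ← mul_assoc, mul_assoc x, hE.map_mul_mul hxB hxsB, (hx _ hy').1,
      zero_mul]
  · refine hEf _ ?_
    rw [star_mul, mul_assoc, ← mul_assoc (star y), ← mul_assoc, hE.map_mul_mul hxsB hxB,
      (hxs _ hy).1, zero_mul]

end InducedIdeal

section Correspondence

variable {A : Type*} [NonUnitalCStarAlgebra A] [PartialOrder A] [StarOrderedRing A]
  {B N J K : Set A} {E : A → A}

theorem ann_inducedIdeal_inter (hB : IsCStarInclusion B) (hRIIP : HasRIIP B)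
    (hE : IsCondExp B E) (hEf : IsFaithful E) (hN : IsNormalizerSemigroup B N)
    (hEinv : IsInvariantCondExp N E) (hJ : IsRegularIdeal J) :
    ann (inducedIdeal E (J ∩ B)) = ann J := by
  have hK := hJ.1.inter_isIdealIn hB.1
  have hKinv := hJ.1.1.invariantUnder_inter (B := B)
  have hJ' := isIdeal_inducedIdeal hB hE hN hEinv hK hKinv
  apply Set.Subset.antisymm
  · have hsub : J ⊆ ann (ann (inducedIdeal E (J ∩ B))) :=
      hRIIP.subset_of_inter_subset hJ (isRegularIdeal_ann hJ'.1.ann)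
        (((inducedIdeal_inter hB hE hK).superset.trans Set.inter_subset_left).trans
          (subset_ann_ann _))
    simpa only [ann_ann_ann] using ann_anti hsub
  · exact hRIIP.subset_of_inter_subset (isRegularIdeal_ann hJ.1.1) (isRegularIdeal_ann hJ'.1)
      fun x hx => ann_inter_subset_ann_inducedIdeal hB hE hEf hN hEinv hK hKinv
        ⟨ann_anti Set.inter_subset_left hx.1, hx.2⟩

theorem ann_inter_eq (hB : IsCStarInclusion B) (hRIIP : HasRIIP B)
    (hE : IsCondExp B E) (hEf : IsFaithful E) (hN : IsNormalizerSemigroup B N)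
    (hEinv : IsInvariantCondExp N E) (hJ : IsRegularIdeal J) :
    ann J ∩ B = ann (J ∩ B) ∩ B := by
  refine (Set.inter_subset_inter_left B (ann_anti Set.inter_subset_left)).antisymm
    fun x hx => ⟨?_, hx.2⟩
  rw [← ann_inducedIdeal_inter hB hRIIP hE hEf hN hEinv hJ]
  exact ann_inter_subset_ann_inducedIdeal hB hE hEf hN hEinv (hJ.1.inter_isIdealIn hB.1)
    hJ.1.1.invariantUnder_inter hx

theorem isRegularIdealIn_inter (hB : IsCStarInclusion B) (hRIIP : HasRIIP B)
    (hE : IsCondExp B E) (hEf : IsFaithful E) (hN : IsNormalizerSemigroup B N)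
    (hEinv : IsInvariantCondExp N E) (hJ : IsRegularIdeal J) : IsRegularIdealIn B (J ∩ B) := by
  refine ⟨hJ.1.inter_isIdealIn hB.1, ?_⟩
  rw [← ann_inter_eq hB hRIIP hE hEf hN hEinv hJ,
    ← ann_inter_eq hB hRIIP hE hEf hN hEinv (isRegularIdeal_ann hJ.1.1), ← hJ.2]

/-- If `a ∈ ann (ann J_K)` then `E(a⋆a)` annihilates `ann K ∩ B ⊆ ann J_K`, hence lies in
`ann (ann K ∩ B) ∩ B = K`. -/
theorem isRegularIdeal_inducedIdeal (hB : IsCStarInclusion B) (hE : IsCondExp B E)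
    (hEf : IsFaithful E) (hN : IsNormalizerSemigroup B N) (hEinv : IsInvariantCondExp N E)
    (hK : IsRegularIdealIn B K) (hKinv : InvariantUnder {n | IsNormalizer B n} K) :
    IsRegularIdeal (inducedIdeal E K) := by
  have hsub := ann_inter_subset_ann_inducedIdeal hB hE hEf hN hEinv hK.1 hKinv
  refine ⟨isIdeal_inducedIdeal hB hE hN hEinv hK.1 hKinv,
    (subset_ann_ann _).antisymm fun a ha => ?_⟩
  change E (star a * a) ∈ K
  rw [hK.2]
  refine ⟨fun b hb => ?_, hE.mem _⟩
  have hbs : star b ∈ ann K ∩ B :=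
    ⟨star_mem_ann (fun _ hk => hK.1.star_mem hB hk) hb.1, hB.1.2.2.2.2.1 b hb.2⟩
  have hab : a * b = 0 := (ha b (hsub hb)).1
  have hba : b * star a = 0 := by
    rw [← star_star b, ← star_mul, (ha _ (hsub hbs)).1, star_zero]
  constructor
  · rw [← hE.map_mul_right hb.2, mul_assoc, hab, mul_zero, hE.map_zero]
  · rw [← hE.map_mul_left hb.2, ← mul_assoc, hba, zero_mul, hE.map_zero]

theorem inducedIdeal_inter_eq_self (hB : IsCStarInclusion B) (hRIIP : HasRIIP B)
    (hE : IsCondExp B E) (hEf : IsFaithful E) (hN : IsNormalizerSemigroup B N)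
    (hEinv : IsInvariantCondExp N E) (hJ : IsRegularIdeal J) :
    inducedIdeal E (J ∩ B) = J := by
  have hreg := isRegularIdeal_inducedIdeal hB hE hEf hN hEinv
    (isRegularIdealIn_inter hB hRIIP hE hEf hN hEinv hJ) hJ.1.1.invariantUnder_inter
  rw [hreg.2, ann_inducedIdeal_inter hB hRIIP hE hEf hN hEinv hJ, ← hJ.2]

end Correspondence

/-- Under the regular ideal intersection property and a faithful `N`-invariant
conditional expectation, `J ↦ J ∩ B` is a Boolean algebra isomorphism from the regular
ideals of `A` onto the invariant regular ideals of `B`, with inverse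
`K ↦ J_K = {a : E(a*a) ∈ K}`: it is a well-defined order-preserving bijection (in both
directions) that sends complements `J^⊥` to relative complements `K^{⊥_B}`. -/
theorem regularIdeal_boolean_iso {B N : Set A} (hB : IsRegularInclusion B)
    (hRIIP : HasRIIP B) (hN : IsNormalizerSemigroup B N) (E : A → A)
    (hE : IsCondExp B E) (hEf : IsFaithful E) (hEinv : IsInvariantCondExp N E) :
    (∀ J : Set A, IsRegularIdeal J →
      IsRegularIdealIn B (J ∩ B) ∧ InvariantUnder {n | IsNormalizer B n} (J ∩ B)) ∧
    (∀ K : Set A, IsRegularIdealIn B K → InvariantUnder {n | IsNormalizer B n} K →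
      IsRegularIdeal {a : A | E (star a * a) ∈ K} ∧
      {a : A | E (star a * a) ∈ K} ∩ B = K) ∧
    (∀ J : Set A, IsRegularIdeal J → {a : A | E (star a * a) ∈ J ∩ B} = J) ∧
    (∀ J₁ J₂ : Set A, IsRegularIdeal J₁ → IsRegularIdeal J₂ →
      (J₁ ⊆ J₂ ↔ J₁ ∩ B ⊆ J₂ ∩ B)) ∧
    (∀ J : Set A, IsRegularIdeal J → ann J ∩ B = ann (J ∩ B) ∩ B) := by
  let _ : NonUnitalCStarAlgebra A := {}
  obtain ⟨hB, -⟩ := hB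
  refine ⟨fun J hJ => ⟨isRegularIdealIn_inter hB hRIIP hE hEf hN hEinv hJ,
      hJ.1.1.invariantUnder_inter⟩,
    fun K hK hKinv => ⟨isRegularIdeal_inducedIdeal hB hE hEf hN hEinv hK hKinv,
      inducedIdeal_inter hB hE hK.1⟩,
    fun J hJ => inducedIdeal_inter_eq_self hB hRIIP hE hEf hN hEinv hJ,
    fun J₁ J₂ h₁ h₂ => ⟨Set.inter_subset_inter_left B,
      fun h => hRIIP.subset_of_inter_subset h₁ h₂ (h.trans Set.inter_subset_left)⟩,
    fun J hJ => ann_inter_eq hB hRIIP hE hEf hN hEinv hJ⟩
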